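/- If two multisets of L vectors in ℝ^D have equal vector symmetric transforms, they are equal: given θ_1,...,θ_L and θ'_1,...,θ'_L in ℝ^D, if ∏_{l=1}^L (s + Σ_{i=1}^D θ_{l,i} t^{i-1}) = ∏_{l=1}^L (s + Σ_{i=1}^D θ'_{l,i} t^{i-1}) as polynomials in two variables s,t, then the multisets {θ_1,...,θ_L} and {θ'_1,...,θ'_L} coincide. -/
import Mathlib


open Polynomial

lemma encode_injective (D : ℕ) :
    Function.Injective (fun v : Fin D → ℝ => ∑ i : Fin D, C (v i) * X ^ (i : ℕ)) := by
  intro v w hvw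
  funext i
  have := congrArg (fun p => p.coeff (i : ℕ)) hvw
  simpa [Polynomial.finset_sum_coeff, Polynomial.coeff_C_mul, Polynomial.coeff_X_pow,
    Fin.val_eq_val] using this

/-- Injectivity of the vector symmetric transform: encode each vector `θ_l ∈ ℝ^D` as the
polynomial `Σ_{i=1}^D θ_{l,i} t^{i-1} ∈ ℝ[t]` and form `∏_l (s + p_l(t))` in `ℝ[t][s]`.
If two multisets of `L` vectors give the same two-variable polynomial, they are equal. -/
theorem vector_symmetric_transform_injective (L D : ℕ)
    (θ θ' : Fin L → Fin D → ℝ)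
    (h : (∏ l : Fin L, (X + C (∑ i : Fin D, C (θ l i) * X ^ (i : ℕ)))
            : Polynomial (Polynomial ℝ))
       = ∏ l : Fin L, (X + C (∑ i : Fin D, C (θ' l i) * X ^ (i : ℕ)))) :
    Multiset.map θ Finset.univ.val = Multiset.map θ' Finset.univ.val := by
  set f : (Fin D → ℝ) → Polynomial ℝ := fun v => ∑ i : Fin D, C (v i) * X ^ (i : ℕ) with hf
  -- Rewrite X + C p = X - C (-p) and use roots of products of linear monic factors
  have key : Multiset.map (fun l => -(f (θ l))) Finset.univ.val
      = Multiset.map (fun l => -(f (θ' l))) Finset.univ.val := by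
    have h1 : (Multiset.map (fun a => X - C a)
        (Multiset.map (fun l => -(f (θ l))) Finset.univ.val)).prod
        = (Multiset.map (fun a => X - C a)
        (Multiset.map (fun l => -(f (θ' l))) Finset.univ.val)).prod := by
      rw [Finset.prod_eq_multiset_prod, Finset.prod_eq_multiset_prod] at h
      simp only [Multiset.map_map, Function.comp, map_neg, sub_neg_eq_add]
      exact h
    have := congrArg Polynomial.roots h1
    rwa [Polynomial.roots_multiset_prod_X_sub_C, Polynomial.roots_multiset_prod_X_sub_C] at this
  have key2 : Multiset.map (fun l => f (θ l)) Finset.univ.val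
      = Multiset.map (fun l => f (θ' l)) Finset.univ.val := by
    have := congrArg (Multiset.map (fun p : Polynomial ℝ => -p)) key
    rw [Multiset.map_map, Multiset.map_map] at this
    simpa only [Function.comp, neg_neg] using this
  apply Multiset.map_injective (encode_injective D)
  rw [Multiset.map_map, Multiset.map_map]
  exact key2
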